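/- 𝒟 ⊆ im A: every element of the submodule 𝒟 = 𝒟₁ ⊕ 𝒟₂ of C⁺(G) lies in the image of the map A : C⁺(G₊₁(v)) → C⁺(G). -/

import Mathlib

/-!
Common setup: the lattice cohomology complex of a weighted graph
(Némethi; J. Greene, "A surgery triangle for lattice cohomology").

A finite graph `G` with integer weights on vertices and signs on (multi-)edges is
encoded by its symmetric incidence data `M : V → V → ℤ`: for `u ≠ w` the entry
`M u w` is the signed number of edges joining `u` and `w`, and `M u u = m(u)` is
the weight of `u`.  This is exactly the data of the intersection pairing `(·,·)`
on `L(G) = ℤ⟨E_u : u ∈ V⟩`, via `M u w = (E_u, E_w)`.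
-/

noncomputable section

open Function

/-- A graph with integer vertex weights and signed multi-edges, encoded by the
symmetric pairing data `M u w = (E_u, E_w)` on `L(G)`. -/
structure WGraph (V : Type*) where
  M : V → V → ℤ
  symm : ∀ u w, M u w = M w u

variable {V : Type*} [Fintype V] [DecidableEq V]

/-- Evaluation of `K ∈ Hom(L(G), ℤ)` (recorded by its components `K u = K(E_u)`)
on a lattice vector `x = ∑ x_u E_u ∈ L(G)`. -/
def evalK (K x : V → ℤ) : ℤ := ∑ u, K u * x u

/-- `E_T = ∑_{j ∈ T} E_j ∈ L(G)`. -/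
def eVec (T : Finset V) : V → ℤ := fun u => if u ∈ T then 1 else 0

/-- Splitting a sum over `V` at a vertex `v`. -/
theorem sum_split (v : V) (f : V → ℤ) :
    ∑ u, f u = f v + ∑ u : {u : V // u ≠ v}, f u.1 := by
  rw [Fintype.sum_eq_add_sum_compl v f]
  congr 1
  exact Finset.sum_subtype _ (fun x => by simp) f

namespace WGraph

/-- The symmetric bilinear pairing `(x, y)` on `L(G)`. -/
def pair (G : WGraph V) (x y : V → ℤ) : ℤ := ∑ u, ∑ w, G.M u w * x u * y w

/-- `K ∈ Hom(L(G),ℤ)` is characteristic: `(K,x) ≡ (x,x) (mod 2)` for all `x ∈ L(G)`. -/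
def IsChar (G : WGraph V) (K : V → ℤ) : Prop :=
  ∀ x : V → ℤ, evalK K x ≡ G.pair x x [ZMOD 2]

/-- The set `Char(G)` of characteristic vectors, as a type. -/
def Ch (G : WGraph V) : Type _ := {K : V → ℤ // G.IsChar K}

/-- `K + 2x ∈ Hom(L(G),ℤ)`, for `K ∈ Hom(L(G),ℤ)` and `x ∈ L(G)` (a lattice vector
is viewed in `Hom(L(G),ℤ)` via the pairing). -/
def chAdd (G : WGraph V) (K x : V → ℤ) : V → ℤ := fun u => K u + 2 * G.pair x (eVec {u})

/-- The difference `q(K + 2x) − q(K) = −((K,x) + (x,x))/2`, where `q(y) = −(y,y)/8`;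
it is an integer whenever `K` is characteristic. -/
def qdiff (G : WGraph V) (K x : V → ℤ) : ℤ := (-(evalK K x + G.pair x x)) / 2

/-- The difference `q(K,S) − q(K) = max { q(K + 2E_T) − q(K) : T ⊆ S }`, where
`q(K,S) = max { q(K + 2 ∑_{j∈T} E_j) : T ⊆ S }`. -/
def qrel (G : WGraph V) (K : V → ℤ) (S : Finset V) : ℤ :=
  S.powerset.sup' (Finset.powerset_nonempty S) fun T => G.qdiff K (eVec T)

/-- `G₊₁(v)`: increase the weight `m(v)` of the vertex `v` by one. -/
def bump (G : WGraph V) (v : V) : WGraph V where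
  M u w := if u = v ∧ w = v then G.M u w + 1 else G.M u w
  symm u w := by
    have h := G.symm u w
    by_cases hu : u = v <;> by_cases hw : w = v <;> simp [hu, hw, h] <;>
      exact G.symm _ _

/-- `G − v`: delete the vertex `v` and all incident edges. -/
def delete (G : WGraph V) (v : V) : WGraph {u : V // u ≠ v} where
  M u w := G.M u.1 w.1
  symm u w := G.symm u.1 w.1

theorem evalK_update (L y : V → ℤ) (v : V) (c : ℤ) :
    evalK (Function.update L v (L v + c)) y = evalK L y + c * y v := by
  unfold evalK
  have h : ∀ u, Function.update L v (L v + c) u * y u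
      = L u * y u + (if u = v then c * y u else 0) := by
    intro u
    rcases eq_or_ne u v with hu | hu <;> simp [hu, Function.update] <;> ring
  simp only [h]
  rw [Finset.sum_add_distrib, Finset.sum_ite_eq' Finset.univ v (fun u => c * y u)]
  simp

theorem IsChar.chAdd {G : WGraph V} {K : V → ℤ} (h : G.IsChar K) (x : V → ℤ) :
    G.IsChar (G.chAdd K x) := by
  intro y
  have key : evalK (G.chAdd K x) y
      = evalK K y + 2 * ∑ u, G.pair x (eVec {u}) * y u := by
    simp only [evalK, WGraph.chAdd, add_mul, mul_assoc]
    rw [Finset.sum_add_distrib, ← Finset.mul_sum]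
  have hy := h y
  simp only [Int.ModEq] at hy ⊢
  rw [key]
  omega

theorem pair_bump (G : WGraph V) (v : V) (y : V → ℤ) :
    (G.bump v).pair y y = G.pair y y + y v * y v := by
  unfold pair bump
  have hu : ∀ u w : V, ((if u = v ∧ w = v then G.M u w + 1 else G.M u w) * y u * y w)
      = G.M u w * y u * y w + (if u = v ∧ w = v then y u * y w else 0) := by
    intro u w
    rcases eq_or_ne u v with h | h <;> rcases eq_or_ne w v with h' | h' <;>
      simp [h, h'] <;> ring
  simp only [hu, Finset.sum_add_distrib]
  congr 1
  have hin : ∀ u : V, (∑ w, if u = v ∧ w = v then y u * y w else 0)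
      = if u = v then y u * y v else 0 := by
    intro u
    rcases eq_or_ne u v with h | h
    · simp [h, Finset.sum_ite_eq' Finset.univ v (fun w => y v * y w)]
    · simp [h]
  rw [Finset.sum_congr rfl (fun u _ => hin u),
    Finset.sum_ite_eq' Finset.univ v (fun u => y u * y v)]
  simp

theorem IsChar.bumpUpdate {G : WGraph V} {L : V → ℤ} (h : G.IsChar L) (v : V) (i : ℤ) :
    (G.bump v).IsChar (Function.update L v (L v + (2 * i + 1))) := by
  intro y
  have h1 := evalK_update L y v (2 * i + 1)
  have h2 := pair_bump G v y
  have hy := h y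
  obtain ⟨k, hk⟩ := Int.even_mul_succ_self (y v - 1)
  have hk' : y v * y v - y v = 2 * k := by
    have h5 : (y v - 1) * (y v - 1 + 1) = y v * y v - y v := by ring
    omega
  have h3 : (2 * i + 1) * y v = 2 * (i * y v) + y v := by ring
  simp only [Int.ModEq] at hy ⊢
  rw [h1, h2, h3]
  omega

theorem IsChar.evenUpdate {G : WGraph V} {L : V → ℤ} (h : G.IsChar L) (v : V) (k : ℤ) :
    G.IsChar (Function.update L v (L v + 2 * k)) := by
  intro y
  have h1 := evalK_update L y v (2 * k)
  have hy := h y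
  have h3 : 2 * k * y v = 2 * (k * y v) := by ring
  simp only [Int.ModEq] at hy ⊢
  rw [h1, h3]
  omega

end WGraph

/-- Extension of `K ∈ Hom(L(G−v),ℤ)` to `Hom(L(G),ℤ)` by the value `t` at `v`:
the vector denoted `(K, t)`. -/
def extV (v : V) (K : {u : V // u ≠ v} → ℤ) (t : ℤ) : V → ℤ :=
  fun u => if h : u = v then t else K ⟨u, h⟩

namespace WGraph

theorem IsChar.extChar {G : WGraph V} {v : V} {K : {u : V // u ≠ v} → ℤ}
    (h : (G.delete v).IsChar K) {t : ℤ} (ht : t ≡ G.M v v [ZMOD 2]) :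
    G.IsChar (extV v K t) := by
  intro y
  have h1 : evalK (extV v K t) y = t * y v + evalK K (fun u => y u.1) := by
    unfold evalK
    rw [sum_split v (fun u => extV v K t u * y u)]
    congr 1
    · simp [extV]
    · exact Finset.sum_congr rfl fun u _ => by simp [extV, u.2]
  have h2 : G.pair y y = (G.delete v).pair (fun u => y u.1) (fun u => y u.1)
      + G.M v v * (y v * y v)
      + 2 * ∑ u : {u : V // u ≠ v}, G.M v u.1 * y v * y u.1 := by
    have step1 : G.pair y y = (∑ w, G.M v w * y v * y w)
        + ∑ u : {u : V // u ≠ v}, ∑ w, G.M u.1 w * y u.1 * y w :=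
      sum_split v (fun u => ∑ w, G.M u w * y u * y w)
    have step2 : (∑ w, G.M v w * y v * y w)
        = G.M v v * y v * y v + ∑ w : {w : V // w ≠ v}, G.M v w.1 * y v * y w.1 :=
      sum_split v _
    have step3 : ∀ u : {u : V // u ≠ v}, (∑ w, G.M u.1 w * y u.1 * y w)
        = G.M u.1 v * y u.1 * y v + ∑ w : {w : V // w ≠ v}, G.M u.1 w.1 * y u.1 * y w.1 :=
      fun u => sum_split v _
    have step4 : (G.delete v).pair (fun u => y u.1) (fun u => y u.1)
        = ∑ u : {u : V // u ≠ v}, ∑ w : {w : V // w ≠ v}, G.M u.1 w.1 * y u.1 * y w.1 := rfl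
    have hc : (∑ u : {u : V // u ≠ v}, G.M u.1 v * y u.1 * y v)
        = ∑ u : {u : V // u ≠ v}, G.M v u.1 * y v * y u.1 := by
      refine Finset.sum_congr rfl fun u _ => ?_
      rw [G.symm u.1 v]; ring
    rw [step1, step2, Finset.sum_congr rfl (fun u _ => step3 u),
      Finset.sum_add_distrib, hc, step4]
    ring
  have hy := h (fun u => y u.1)
  obtain ⟨k, hk⟩ := Int.even_mul_succ_self (y v - 1)
  have hk' : y v * y v - y v = 2 * k := by
    have h5 : (y v - 1) * (y v - 1 + 1) = y v * y v - y v := by ring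
    omega
  obtain ⟨a, ha⟩ : (2:ℤ) ∣ t - G.M v v := Int.ModEq.dvd ht.symm
  have e1 : t * y v = G.M v v * y v + 2 * (a * y v) := by
    have h6 : t = G.M v v + 2 * a := by omega
    rw [h6]; ring
  have e2 : G.M v v * (y v * y v) = G.M v v * y v + 2 * (G.M v v * k) := by
    have h7 : y v * y v = y v + 2 * k := by omega
    rw [h7]; ring
  simp only [Int.ModEq] at hy ⊢
  rw [h1, h2, e1, e2]
  omega

variable {G : WGraph V}

/-- `K + 2x` as a characteristic vector. -/
def Ch.add (K : G.Ch) (x : V → ℤ) : G.Ch := ⟨G.chAdd K.1 x, K.2.chAdd x⟩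

/-- For `K = (K', t) ∈ Char(G)`, the characteristic vector
`(K', t + 2i + 1) ∈ Char(G₊₁(v))`. -/
def Ch.bumpSh (K : G.Ch) (v : V) (i : ℤ) : (G.bump v).Ch :=
  ⟨Function.update K.1 v (K.1 v + (2 * i + 1)), K.2.bumpUpdate v i⟩

/-- For `K = (K', t) ∈ Char(G)`, the characteristic vector `(K', t + 2k) ∈ Char(G)`. -/
def Ch.evenSh (K : G.Ch) (v : V) (k : ℤ) : G.Ch :=
  ⟨Function.update K.1 v (K.1 v + 2 * k), K.2.evenUpdate v k⟩

/-- For `K ∈ Char(G−v)`, the characteristic vector `(K, m(v) + 2i) ∈ Char(G)`. -/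
def Ch.extend {v : V} (K : (G.delete v).Ch) (i : ℤ) : G.Ch :=
  ⟨extV v K.1 (G.M v v + 2 * i),
    K.2.extChar (by show (G.M v v + 2 * i) % 2 = G.M v v % 2; omega)⟩

end WGraph

/-- `𝒯⁺₀ = 𝔽[U,U⁻¹]/(U·𝔽[U])` over `𝔽 = ℤ/2ℤ`: the coefficient at `d ∈ ℕ` records
the coefficient of `U^{−d}`. -/
def Tplus : Type := ℕ →₀ ZMod 2

instance : AddCommGroup Tplus := inferInstanceAs (AddCommGroup (ℕ →₀ ZMod 2))
instance : Module (ZMod 2) Tplus := inferInstanceAs (Module (ZMod 2) (ℕ →₀ ZMod 2))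

/-- The element `U^{-m}` of `𝒯⁺₀`. -/
def Um (m : ℕ) : Tplus := (Finsupp.single m 1 : ℕ →₀ ZMod 2)

/-- Multiplication by `U^e` on `𝒯⁺₀`: `U^e · U^{−d} = U^{−(d−e)}` (which is `0` if `d < e`). -/
def Upow (e : ℤ) (f : Tplus) : Tplus :=
  (Finsupp.comapDomain (fun d : ℕ => (d : ℤ) + e)
    (Finsupp.embDomain ⟨(Nat.cast : ℕ → ℤ), Nat.cast_injective⟩ (f : ℕ →₀ ZMod 2))
    (fun a _ b _ hab => Nat.cast_injective (add_right_cancel hab)) : ℕ →₀ ZMod 2)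

theorem Upow_zero (e : ℤ) : Upow e 0 = 0 := by
  show (Finsupp.comapDomain _ (Finsupp.embDomain _ (0 : ℕ →₀ ZMod 2)) _ : ℕ →₀ ZMod 2)
    = (0 : ℕ →₀ ZMod 2)
  ext d
  simp

/-- `C⁺(G)`: the `𝔽[U]`-module of finitely supported maps `Char(G) × 𝒫(V) → 𝒯⁺₀`. -/
abbrev Cplus (G : WGraph V) : Type _ := (G.Ch × Finset V) →₀ Tplus

/-- The action of (multiplication by) `U` on `C⁺(G)`. -/
def UC (G : WGraph V) (φ : Cplus G) : Cplus G := Finsupp.mapRange (Upow 1) (Upow_zero 1) φ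

/-- `U^{−m} · (K,S)^∨`: the element of `C⁺(G)` supported at the single pair `(K,S)`
with value `U^{−m}`. -/
def dual {G : WGraph V} (p : G.Ch × Finset V) (m : ℕ) : Cplus G :=
  Finsupp.single p (Um m)

/-- The exponent `q(K,S) − q(K, S−w)`. -/
def dExp₁ (G : WGraph V) (K : V → ℤ) (S : Finset V) (w : V) : ℤ :=
  G.qrel K S - G.qrel K (S.erase w)

/-- The exponent `q(K,S) − q(K + 2E_w, S−w)`. -/
def dExp₂ (G : WGraph V) (K : V → ℤ) (S : Finset V) (w : V) : ℤ :=
  G.qrel K S - (G.qdiff K (eVec {w}) + G.qrel (G.chAdd K (eVec {w})) (S.erase w))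

/-- `δ` is the operator on `C⁺(G)` given by
`δ(φ)(K,S) = ∑_{w∈S} [U^{q(K,S)−q(K,S−w)}·φ(K,S−w) + U^{q(K,S)−q(K+2E_w,S−w)}·φ(K+2E_w,S−w)]`. -/
def IsDelta (G : WGraph V) (δ : Cplus G → Cplus G) : Prop :=
  ∀ (φ : Cplus G) (K : G.Ch) (S : Finset V),
    δ φ (K, S) = ∑ w ∈ S,
      (Upow (dExp₁ G K.1 S w) (φ (K, S.erase w))
        + Upow (dExp₂ G K.1 S w) (φ (K.add (eVec {w}), S.erase w)))

/-- The exponent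
`c(i,(K,t),S) = [q((K,t),S) − q(K,t)] − [q'((K,t+2i+1),S) − q'(K,t+2i+1)] + i(i+1)/2`. -/
def cExp (G : WGraph V) (v : V) (i : ℤ) (K : G.Ch) (S : Finset V) : ℤ :=
  G.qrel K.1 S - (G.bump v).qrel (K.bumpSh v i).1 S + i * (i + 1) / 2

/-- `A` is the map `C⁺(G₊₁(v)) → C⁺(G)` given by
`A(φ)((K,t),S) = ∑_{i∈ℤ} U^{c(i,(K,t),S)} · φ((K,t+2i+1),S)`. -/
def IsA (G : WGraph V) (v : V) (A : Cplus (G.bump v) → Cplus G) : Prop :=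
  ∀ (φ : Cplus (G.bump v)) (K : G.Ch) (S : Finset V),
    A φ (K, S) = ∑ᶠ i : ℤ, Upow (cExp G v i K S) (φ (K.bumpSh v i, S))

/-- A subset `S ⊆ V − v` viewed as a subset of `V`. -/
def liftS (v : V) (S : Finset {u : V // u ≠ v}) : Finset V :=
  S.map ⟨Subtype.val, Subtype.val_injective⟩

/-- `B` is the map `C⁺(G) → C⁺(G−v)` given by
`B(φ)(K,S) = ∑_{i∈ℤ} φ((K, m(v)+2i), S)`. -/
def IsB (G : WGraph V) (v : V) (B : Cplus G → Cplus (G.delete v)) : Prop :=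
  ∀ (φ : Cplus G) (K : (G.delete v).Ch) (S : Finset {u : V // u ≠ v}),
    B φ (K, S) = ∑ᶠ i : ℤ, φ (K.extend i, liftS v S)

/-- `r((K,t),S) = q((K,t),S−v) − q((K,t)+2E_v,S−v)` (for `v ∈ S`). -/
def rVal (G : WGraph V) (v : V) (K : G.Ch) (S : Finset V) : ℤ :=
  G.qrel K.1 (S.erase v)
    - (G.qdiff K.1 (eVec {v}) + G.qrel (G.chAdd K.1 (eVec {v})) (S.erase v))

/-- The lattice cohomology `ℍ⁺`: the homology of the complex `(C⁺, δ)`. -/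
abbrev Hlat {G : WGraph V} (δ : Cplus G →ₗ[ZMod 2] Cplus G) : Type _ :=
  LinearMap.ker δ ⧸ (LinearMap.range δ).comap (LinearMap.ker δ).subtype

/-- `𝒟₁ ⊆ C⁺(G)`: the `𝔽`-submodule generated by the `U^{−m}·((K,t),S)^∨` with `v ∈ S`. -/
def D1 (G : WGraph V) (v : V) : Submodule (ZMod 2) (Cplus G) :=
  Submodule.span (ZMod 2)
    {χ | ∃ (K : G.Ch) (S : Finset V) (m : ℕ), v ∈ S ∧ χ = dual (K, S) m}

/-- `𝒟₂ ⊆ C⁺(G)`: the `𝔽`-submodule generated by the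
`U^{−m}·[((K,t),S)^∨ + ((K,t+2),S)^∨]` with `v ∉ S`. -/
def D2 (G : WGraph V) (v : V) : Submodule (ZMod 2) (Cplus G) :=
  Submodule.span (ZMod 2)
    {χ | ∃ (K : G.Ch) (S : Finset V) (m : ℕ), v ∉ S ∧
      χ = dual (K, S) m + dual (K.evenSh v 1, S) m}


/-!
In the coordinates `(K,t)`, `A` sends `U^{-m}·((K,t+2j+1),S)^∨` to
`∑ᵢ U^{c(i)}·U^{-m}·((K,t+2(j-i)),S)^∨`, a finite sum since `c(i)` grows quadratically in `i`.
We induct on `m`: every term with `c(i) > 0` lies in lower degree.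

If `v ∉ S`, then `c(i) = i(i+1)/2`, so the terms `i` and `-1-i` pair up. For `j = 0` the pair
`i = 0` is the generator `((K,t),S)^∨ + ((K,t+2),S)^∨` of `𝒟₂`, and every other pair is, in lower
degree, a telescoping sum of such generators.

If `v ∈ S`, split `q((K,t),S) − q(K,t) = max(a, b)` according to whether `T ∋ v`, with
`a = q(K,S−v) − q(K)`. For `j = -1` the exponent is `max(a, b+1+i) − max(a, b) + i(i+1)/2`.
It vanishes at `i = -1`, which gives `((K,t),S)^∨`. Apart from that, it vanishes only at `i = 0`
when `b < a` and at `i = -2` when `a < b`. These extra terms are `((K,t∓2),S)^∨`, and for them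
`|a − b|` is one smaller, so a second induction on `|a − b|` concludes.
-/

theorem Finset.sup'_sub_const {ι M : Type*} [AddGroup M] [LinearOrder M] [AddRightMono M]
    (s : Finset ι) (hs : s.Nonempty) (f : ι → M) (c : M) :
    s.sup' hs (fun i => f i - c) = s.sup' hs f - c := by
  simp_rw [sub_eq_add_neg, Finset.sup'_add]

theorem Finset.sum_update_add_of_mem {ι M : Type*} [DecidableEq ι] [AddCommMonoid M]
    (f : ι → M) {s : Finset ι} {i : ι} (hi : i ∈ s) (c : M) :
    ∑ u ∈ s, update f i (f i + c) u = ∑ u ∈ s, f u + c := by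
  rw [Finset.sum_update_of_mem hi, ← Finset.erase_eq, ← Finset.add_sum_erase s f hi,
    add_right_comm]

theorem Finset.sum_Icc_neg_sub_one_eq_sum_add_reflect {M : Type*} [AddCommMonoid M]
    (f : ℤ → M) (n : ℤ) :
    ∑ i ∈ Icc (-n - 1) n, f i = ∑ i ∈ Icc 0 n, (f i + f (-1 - i)) := by
  have hsplit : Icc (-n - 1) n = Icc 0 n ∪ Icc (-n - 1) (-1) := by
    ext i
    simp only [mem_Icc, mem_union]
    omega
  have hdisj : Disjoint (Icc 0 n) (Icc (-n - 1) (-1)) :=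
    disjoint_left.2 fun i hi hi' => by simp only [mem_Icc] at hi hi'; omega
  rw [hsplit, sum_union hdisj, sum_add_distrib]
  congr 1
  refine sum_nbij' (fun i => -1 - i) (fun i => -1 - i) ?_ ?_ ?_ ?_ ?_ <;> simp <;> omega

theorem add_mem_of_forall_add_add_one_mem {M : Type*} [AddCommGroup M] [Module (ZMod 2) M]
    {H : AddSubgroup M} {f : ℤ → M} (hf : ∀ k, f k + f (k + 1) ∈ H) (k l : ℤ) :
    f k + f l ∈ H := by
  induction l using Int.inductionOn' (b := k) with
  | zero => rw [ZModModule.add_self]; exact H.zero_mem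
  | succ l _ hl => rw [← ZModModule.add_add_add_cancel _ (f l)]; exact H.add_mem hl (hf l)
  | pred l _ hl =>
    rw [← ZModModule.add_add_add_cancel _ (f l), add_comm (f l)]
    exact H.add_mem hl (by simpa using hf (l - 1))

theorem two_mul_triangle (i : ℤ) : 2 * (i * (i + 1) / 2) = i * (i + 1) :=
  Int.two_mul_ediv_two_of_even (Int.even_mul_succ_self i)

theorem triangle_neg_sub_one (i : ℤ) : (-1 - i) * (-1 - i + 1) / 2 = i * (i + 1) / 2 := by
  congr 1
  ring

theorem lt_triangle {m : ℕ} {i : ℤ} (hi : i < -(m : ℤ) - 2 ∨ (m : ℤ) + 1 < i) :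
    (m : ℤ) < i * (i + 1) / 2 := by
  have := two_mul_triangle i
  rcases hi with hi | hi <;> nlinarith

/-- The exponent `c(i,(K,t−2i−2),S)` when `v ∈ S`, where `a = q(K,S−v) − q(K)` and `b` is the
contribution of the subsets through `v`. -/
def memExp (a b i : ℤ) : ℤ := max a (b + 1 + i) - max a b + i * (i + 1) / 2

theorem memExp_neg_one (a b : ℤ) : memExp a b (-1) = 0 := by
  simp [memExp]

theorem lt_memExp {a b i : ℤ} {m : ℕ} (hi : i < -(m : ℤ) - 2 ∨ (m : ℤ) + 1 < i) :
    (m : ℤ) < memExp a b i := by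
  have := two_mul_triangle i
  unfold memExp
  rcases hi with hi | hi
  · have : max a b + (1 + i) ≤ max a (b + 1 + i) := by omega
    nlinarith
  · have : max a b ≤ max a (b + 1 + i) := by omega
    nlinarith

theorem memExp_pos_or (a b : ℤ) {i : ℤ} (hi : i ≠ -1) :
    0 < memExp a b i ∨ (i = 0 ∧ b < a ∧ memExp a b i = 0) ∨
      (i = -2 ∧ a < b ∧ memExp a b i = 0) := by
  have := two_mul_triangle i
  unfold memExp
  rcases lt_or_ge i (-2) with hi' | hi'
  · have : max a b + (1 + i) ≤ max a (b + 1 + i) := by omega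
    left; nlinarith
  rcases lt_or_ge 0 i with hi'' | hi''
  · have : max a b ≤ max a (b + 1 + i) := by omega
    left; nlinarith
  obtain rfl | rfl : i = -2 ∨ i = 0 := by omega
  all_goals norm_num; omega

theorem Upow_add (e : ℤ) (f g : Tplus) : Upow e (f + g) = Upow e f + Upow e g :=
  Finsupp.ext fun d =>
    congrArg (fun x : ℤ →₀ ZMod 2 => x ((d : ℤ) + e))
      (Finsupp.embDomain_add ⟨(Nat.cast : ℕ → ℤ), Nat.cast_injective⟩
        (f : ℕ →₀ ZMod 2) (g : ℕ →₀ ZMod 2))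

theorem Upow_Um (e : ℤ) (m : ℕ) :
    Upow e (Um m) = if e ≤ m then Um ((m : ℤ) - e).toNat else 0 :=
  Finsupp.ext fun d => by
    change (Finsupp.embDomain ⟨(Nat.cast : ℕ → ℤ), Nat.cast_injective⟩
        (Finsupp.single m 1 : ℕ →₀ ZMod 2)) ((d : ℤ) + e)
      = ((if e ≤ m then Finsupp.single ((m : ℤ) - e).toNat 1 else 0 : ℕ →₀ ZMod 2)) d
    rw [Finsupp.embDomain_single, Finsupp.single_apply]
    simp only [Function.Embedding.coeFn_mk]
    split_ifs
    all_goals simp [Finsupp.single_apply]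
    all_goals omega

theorem Upow_Um_zero (m : ℕ) : Upow 0 (Um m) = Um m := by
  simp [Upow_Um]

theorem Upow_Um_of_lt {e : ℤ} {m : ℕ} (h : m < e) : Upow e (Um m) = 0 := by
  simp [Upow_Um, not_le.2 h]

theorem Upow_Um_of_pos {e : ℤ} (he : 0 < e) (m : ℕ) :
    Upow e (Um m) = 0 ∨ ∃ m' < m, Upow e (Um m) = Um m' := by
  rw [Upow_Um]
  split_ifs with h
  · exact .inr ⟨_, by omega, rfl⟩
  · exact .inl rfl

namespace WGraph

variable {G : WGraph V} {v : V}

theorem Ch.evenSh_zero (K : G.Ch) : K.evenSh v 0 = K :=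
  Subtype.ext (by simp [Ch.evenSh])

theorem Ch.evenSh_evenSh (K : G.Ch) (j k : ℤ) :
    (K.evenSh v j).evenSh v k = K.evenSh v (j + k) :=
  Subtype.ext (by simp only [Ch.evenSh, update_self, update_idem]; congr 1; ring)

theorem Ch.bumpSh_injective (K : G.Ch) : Injective (K.bumpSh v) := fun i j h => by
  have := congrFun (congrArg Subtype.val h) v
  simp only [Ch.bumpSh, update_self] at this
  omega

theorem Ch.bumpSh_eq_bumpSh_iff {K₀ K : G.Ch} {i j : ℤ} :
    K₀.bumpSh v i = K.bumpSh v j ↔ K₀ = K.evenSh v (j - i) := by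
  constructor
  · intro h
    apply Subtype.ext
    ext u
    have hu := congrFun (congrArg Subtype.val h) u
    rcases eq_or_ne u v with rfl | huv
    · simp only [Ch.bumpSh, Ch.evenSh, update_self] at hu ⊢
      omega
    · simpa [Ch.bumpSh, Ch.evenSh, update_of_ne huv] using hu
  · rintro rfl
    apply Subtype.ext
    simp only [Ch.bumpSh, Ch.evenSh, update_self, update_idem]
    congr 1
    ring


theorem qdiff_eVec (G : WGraph V) (K : V → ℤ) (T : Finset V) :
    G.qdiff K (eVec T) = -(∑ u ∈ T, K u + G.pair (eVec T) (eVec T)) / 2 := by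
  simp only [qdiff, evalK, eVec, mul_ite, mul_one, mul_zero, Finset.sum_ite_mem,
    Finset.univ_inter]

theorem qdiff_congr {K₁ K₂ : V → ℤ} {T : Finset V} (h : ∀ u ∈ T, K₁ u = K₂ u) :
    G.qdiff K₁ (eVec T) = G.qdiff K₂ (eVec T) := by
  rw [qdiff_eVec, qdiff_eVec, Finset.sum_congr rfl h]

theorem qdiff_update_of_mem (K : V → ℤ) {T : Finset V} (hv : v ∈ T) (c : ℤ) :
    G.qdiff (update K v (K v + 2 * c)) (eVec T) = G.qdiff K (eVec T) - c := by
  rw [qdiff_eVec, qdiff_eVec, Finset.sum_update_add_of_mem K hv]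
  omega

theorem qdiff_bump_bumpSh (K : G.Ch) (i : ℤ) (T : Finset V) :
    (G.bump v).qdiff (K.bumpSh v i).1 (eVec T)
      = G.qdiff K.1 (eVec T) - if v ∈ T then i + 1 else 0 := by
  rw [qdiff_eVec, qdiff_eVec, pair_bump]
  by_cases hv : v ∈ T
  · simp only [Ch.bumpSh, Finset.sum_update_add_of_mem K.1 hv, eVec, if_pos hv]
    omega
  · have hK : ∀ u ∈ T, (K.bumpSh v i).1 u = K.1 u := fun u hu =>
      update_of_ne (ne_of_mem_of_not_mem hu hv) _ _
    simp [Finset.sum_congr rfl hK, eVec, hv]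

theorem qrel_congr {K₁ K₂ : V → ℤ} {S : Finset V} (h : ∀ u ∈ S, K₁ u = K₂ u) :
    G.qrel K₁ S = G.qrel K₂ S :=
  Finset.sup'_congr _ rfl fun _ hT => qdiff_congr fun u hu => h u (Finset.mem_powerset.1 hT hu)

theorem qrel_bump_bumpSh {S : Finset V} (hv : v ∉ S) (K : G.Ch) (i : ℤ) :
    (G.bump v).qrel (K.bumpSh v i).1 S = G.qrel K.1 S :=
  Finset.sup'_congr _ rfl fun _ hT => by
    rw [qdiff_bump_bumpSh, if_neg fun h => hv (Finset.mem_powerset.1 hT h), sub_zero]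

def qrelInsert (G : WGraph V) (v : V) (K : V → ℤ) (S : Finset V) : ℤ :=
  (S.erase v).powerset.sup' (Finset.powerset_nonempty _) fun T => G.qdiff K (eVec (insert v T))

theorem qrel_eq_max_qrelInsert {S : Finset V} (hv : v ∈ S) (K : V → ℤ) :
    G.qrel K S = max (G.qrel K (S.erase v)) (G.qrelInsert v K S) := by
  have hS : S.powerset = (S.erase v).powerset ∪ (S.erase v).powerset.image (insert v) := by
    rw [← Finset.powerset_insert, Finset.insert_erase hv]
  unfold qrel qrelInsert
  rw [Finset.sup'_congr _ hS fun _ _ => rfl, Finset.sup'_union (Finset.powerset_nonempty _)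
    ((Finset.powerset_nonempty _).image _), Finset.sup'_image]
  rfl

theorem qrelInsert_evenSh (K : G.Ch) (k : ℤ) (S : Finset V) :
    G.qrelInsert v (K.evenSh v k).1 S = G.qrelInsert v K.1 S - k := by
  unfold qrelInsert
  simp_rw [Ch.evenSh, qdiff_update_of_mem _ (Finset.mem_insert_self v _)]
  exact Finset.sup'_sub_const _ _ _ _

theorem qrelInsert_bump_bumpSh (K : G.Ch) (i : ℤ) (S : Finset V) :
    (G.bump v).qrelInsert v (K.bumpSh v i).1 S = G.qrelInsert v K.1 S - (i + 1) := by
  unfold qrelInsert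
  simp_rw [qdiff_bump_bumpSh, if_pos (Finset.mem_insert_self v _)]
  exact Finset.sup'_sub_const _ _ _ _

theorem cExp_of_not_mem {S : Finset V} (hv : v ∉ S) (i : ℤ) (K : G.Ch) :
    cExp G v i K S = i * (i + 1) / 2 := by
  rw [cExp, qrel_bump_bumpSh hv, sub_self, zero_add]

theorem cExp_of_mem {S : Finset V} (hv : v ∈ S) (i : ℤ) (K : G.Ch) :
    cExp G v i K S = max (G.qrel K.1 (S.erase v)) (G.qrelInsert v K.1 S)
      - max (G.qrel K.1 (S.erase v)) (G.qrelInsert v K.1 S - (i + 1)) + i * (i + 1) / 2 := by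
  rw [cExp, qrel_eq_max_qrelInsert hv, qrel_eq_max_qrelInsert hv,
    qrel_bump_bumpSh (Finset.notMem_erase v S), qrelInsert_bump_bumpSh]

theorem cExp_evenSh_of_mem {S : Finset V} (hv : v ∈ S)
    (K : G.Ch) (i : ℤ) :
    cExp G v i (K.evenSh v (-1 - i)) S
      = memExp (G.qrel K.1 (S.erase v)) (G.qrelInsert v K.1 S) i := by
  have ha : G.qrel (K.evenSh v (-1 - i)).1 (S.erase v) = G.qrel K.1 (S.erase v) :=
    qrel_congr fun u hu => update_of_ne (Finset.ne_of_mem_erase hu) _ _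
  rw [cExp_of_mem hv, ha, qrelInsert_evenSh, memExp]
  ring_nf

end WGraph

namespace IsA

open WGraph

variable {G : WGraph V} {v : V} {A : Cplus (G.bump v) → Cplus G}

theorem support_finite (ψ : Cplus (G.bump v)) (K : G.Ch) (S : Finset V) :
    (support fun i => Upow (cExp G v i K S) (ψ (K.bumpSh v i, S))).Finite := by
  refine (ψ.hasFiniteSupport.preimage
    ((Prod.mk_left_injective S).comp K.bumpSh_injective).injOn).subset fun i hi => ?_
  contrapose! hi
  simp only [Set.mem_preimage, mem_support, not_not, comp_apply] at hi
  simp [hi, Upow_zero]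

theorem map_zero (hA : IsA G v A) : A 0 = 0 := by
  ext ⟨K, S⟩
  simp [hA 0 K S, Upow_zero]

theorem map_add (hA : IsA G v A) (ψ₁ ψ₂ : Cplus (G.bump v)) :
    A (ψ₁ + ψ₂) = A ψ₁ + A ψ₂ := by
  ext ⟨K, S⟩
  simp only [Finsupp.add_apply, hA _ K S, Upow_add]
  exact finsum_add_distrib (support_finite ψ₁ K S) (support_finite ψ₂ K S)

def toAddMonoidHom (hA : IsA G v A) : Cplus (G.bump v) →+ Cplus G where
  toFun := A
  map_zero' := hA.map_zero
  map_add' := hA.map_add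

theorem apply_dual_bumpSh (hA : IsA G v A) (K : G.Ch) (j : ℤ) (S : Finset V) (m : ℕ)
    (s : Finset ℤ) (hs : ∀ i ∉ s, (m : ℤ) < cExp G v i (K.evenSh v (j - i)) S) :
    A (dual (K.bumpSh v j, S) m) = ∑ i ∈ s,
      Finsupp.single (K.evenSh v (j - i), S) (Upow (cExp G v i (K.evenSh v (j - i)) S) (Um m)) := by
  classical
  ext ⟨K₀, S₀⟩
  let F : ℤ → Tplus := fun i =>
    if (K.evenSh v (j - i), S) = (K₀, S₀) then Upow (cExp G v i K₀ S₀) (Um m) else 0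
  have hL : ∀ i, Upow (cExp G v i K₀ S₀) (dual (K.bumpSh v j, S) m (K₀.bumpSh v i, S₀)) = F i := by
    intro i
    simp only [F, dual, Finsupp.single_apply, Prod.mk.injEq, eq_comm (a := K.bumpSh v j),
      Ch.bumpSh_eq_bumpSh_iff, eq_comm (a := K₀), eq_comm (a := S)]
    split_ifs <;> simp [Upow_zero]
  have hR : ∀ i, Finsupp.single (K.evenSh v (j - i), S)
      (Upow (cExp G v i (K.evenSh v (j - i)) S) (Um m)) (K₀, S₀) = F i := by
    intro i
    simp only [F, Finsupp.single_apply]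
    split_ifs with h
    · obtain ⟨rfl, rfl⟩ := Prod.mk.inj h
      rfl
    · rfl
  rw [hA, Finsupp.finsetSum_apply, finsum_congr hL, Finset.sum_congr rfl fun i _ => hR i]
  refine finsum_eq_sum_of_support_subset F fun i hi => ?_
  by_contra his
  simp only [F, mem_support, ne_eq, ite_eq_right_iff, Classical.not_imp] at hi
  obtain ⟨h, hne⟩ := hi
  obtain ⟨rfl, rfl⟩ := Prod.mk.inj h
  exact hne (Upow_Um_of_lt (hs i his))

end IsA

section Range

open WGraph

variable {G : WGraph V} {v : V} {A : Cplus (G.bump v) → Cplus G}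

theorem dual_mem_range_of_mem (hA : IsA G v A) {S : Finset V} (hv : v ∈ S) (m : ℕ) (K : G.Ch) :
    dual (K, S) m ∈ hA.toAddMonoidHom.range := by
  induction m using Nat.strong_induction_on generalizing K with | _ m ihm => ?_
  induction hn : (G.qrel K.1 (S.erase v) - G.qrelInsert v K.1 S).natAbs
    using Nat.strong_induction_on generalizing K with | _ n ihn => ?_
  set a := G.qrel K.1 (S.erase v)
  set b := G.qrelInsert v K.1 S
  have hsum := hA.apply_dual_bumpSh K (-1) S m (Finset.Icc (-(m : ℤ) - 2) (m + 1)) fun i hi => by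
    rw [cExp_evenSh_of_mem hv]
    exact lt_memExp (by simp only [Finset.mem_Icc, not_and_or, not_le] at hi; omega)
  simp only [cExp_evenSh_of_mem hv] at hsum
  rw [← Finset.add_sum_erase _ _ (by simp; omega : (-1 : ℤ) ∈ Finset.Icc (-(m : ℤ) - 2) (m + 1)),
    memExp_neg_one, Upow_Um_zero, sub_self, Ch.evenSh_zero] at hsum
  refine (AddSubgroup.add_mem_cancel_right _ (AddSubgroup.sum_mem _ fun i hi => ?_)).1 ⟨_, hsum⟩
  have gap (k : ℤ) :
      G.qrel (K.evenSh v k).1 (S.erase v) - G.qrelInsert v (K.evenSh v k).1 S = a - b + k := by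
    rw [qrelInsert_evenSh, qrel_congr fun u hu => update_of_ne (Finset.ne_of_mem_erase hu) _ _]
    ring
  rcases memExp_pos_or a b (Finset.ne_of_mem_erase hi) with hpos | ⟨rfl, hba, h0⟩ | ⟨rfl, hab, h0⟩
  · rcases Upow_Um_of_pos hpos m with h | ⟨m', hm', h⟩
    · rw [h, Finsupp.single_zero]
      exact zero_mem _
    · rw [h]
      exact ihm m' hm' _
  · rw [h0, Upow_Um_zero]
    exact ihn _ (by rw [← hn]; omega) _ (congrArg Int.natAbs (gap _))
  · rw [h0, Upow_Um_zero]
    exact ihn _ (by rw [← hn]; omega) _ (congrArg Int.natAbs (gap _))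

theorem dual_add_dual_evenSh_mem_range_of_not_mem (hA : IsA G v A) {S : Finset V} (hv : v ∉ S)
    (m : ℕ) (K : G.Ch) :
    dual (K, S) m + dual (K.evenSh v 1, S) m ∈ hA.toAddMonoidHom.range := by
  induction m using Nat.strong_induction_on generalizing K with | _ m ihm => ?_
  have hsum := hA.apply_dual_bumpSh K 0 S m (Finset.Icc (-((m : ℤ) + 1) - 1) (m + 1))
    fun i hi => by
      rw [cExp_of_not_mem hv]
      exact lt_triangle (by simp only [Finset.mem_Icc, not_and_or, not_le] at hi; omega)
  simp only [cExp_of_not_mem hv, triangle_neg_sub_one,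
    Finset.sum_Icc_neg_sub_one_eq_sum_add_reflect] at hsum
  rw [← Finset.add_sum_erase _ _ (Finset.mem_Icc.2 ⟨le_rfl, by omega⟩)] at hsum
  -- the pair `i = 0` is the generator itself; the others carry `U^{i(i+1)/2}`, `i ≥ 1`
  norm_num [Upow_Um_zero, Ch.evenSh_zero] at hsum
  refine (AddSubgroup.add_mem_cancel_right _ (AddSubgroup.sum_mem _ fun i hi => ?_)).1 ⟨_, hsum⟩
  have hi : 0 < i := (Finset.mem_Ioc.1 hi).1
  rcases Upow_Um_of_pos (by have := two_mul_triangle i; nlinarith) m with h | ⟨m', hm', h⟩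
  · simp only [h, Finsupp.single_zero, add_zero]
    exact zero_mem _
  · rw [h]
    refine add_mem_of_forall_add_add_one_mem (f := fun k => dual (K.evenSh v k, S) m')
      (fun k => ?_) _ _
    simpa only [Ch.evenSh_evenSh] using ihm m' hm' (K.evenSh v k)

end Range

/-- `𝒟 ⊆ im A`: every element of the submodule `𝒟 = 𝒟₁ ⊕ 𝒟₂` of `C⁺(G)`
lies in the image of the map `A : C⁺(G₊₁(v)) → C⁺(G)`. -/
theorem D_subset_range_A (G : WGraph V) (v : V)
    (A : Cplus (G.bump v) → Cplus G) (hA : IsA G v A) :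
    ∀ φ ∈ D1 G v ⊔ D2 G v, ∃ ψ, A ψ = φ := by
  have hD : D1 G v ⊔ D2 G v ≤ AddSubgroup.toZModSubmodule 2 hA.toAddMonoidHom.range := by
    refine sup_le (Submodule.span_le.2 ?_) (Submodule.span_le.2 ?_)
    · rintro _ ⟨K, S, m, hv, rfl⟩
      exact dual_mem_range_of_mem hA hv m K
    · rintro _ ⟨K, S, m, hv, rfl⟩
      exact dual_add_dual_evenSh_mem_range_of_not_mem hA hv m K
  exact hD

end
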